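/- Let G be a group, N a normal subgroup of G, and k, c integers with 1 ≤ k < c such that the k-fold iterated commutator subgroup [N,_kG] is trivial (the pair (G,N) is nilpotent of class at most k). Let N* be a group on which G acts by automorphisms, and let φ : N* → G be a group homomorphism with range N and satisfying φ(g • e) = g·φ(e)·g⁻¹ for all g ∈ G and e ∈ N*. For a subgroup X of N*, let [X,G] denote the subgroup of N* generated by {x⁻¹·(g • x) : x ∈ X, g ∈ G}, and let [X,_iG] denote its i-fold iterate. If ker φ ≤ [N*,_cG] and [ker φ,_cG] is trivial, then ker φ is trivial. (Hence a pair (G,N) nilpotent of class at most k with nontrivial c-nilpotent multiplier has no c-covering pair for c > k.) -/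

import Mathlib

/-- `itComm X Y k` is the `k`-fold iterated commutator subgroup
`[X,_k Y] = ⁅…⁅⁅X,Y⁆,Y⁆,…,Y⁆` (with `k` copies of `Y`); `itComm X Y 0 = X`. -/
def itComm {P : Type*} [Group P] (X Y : Subgroup P) : ℕ → Subgroup P
  | 0 => X
  | k + 1 => ⁅itComm X Y k, Y⁆

/-- For a group `G` acting by automorphisms on a group `H` and a subgroup `X` of `H`,
`relComm G X = [X, G]` is the subgroup of `H` generated by the `G`-commutators
`x⁻¹ * (g • x)` with `x ∈ X`, `g ∈ G`. -/
def relComm (G : Type*) {H : Type*} [Group G] [Group H] [MulDistribMulAction G H]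
    (X : Subgroup H) : Subgroup H :=
  Subgroup.closure {y | ∃ x ∈ X, ∃ g : G, y = x⁻¹ * (g • x)}

/-- `relCommIter G X i = [X,_i G]`, the `i`-fold iterate of `relComm`. -/
def relCommIter (G : Type*) {H : Type*} [Group G] [Group H] [MulDistribMulAction G H]
    (X : Subgroup H) : ℕ → Subgroup H
  | 0 => X
  | i + 1 => relComm G (relCommIter G X i)

/-!
Since `φ` intertwines the action with conjugation, it maps `[N*,_i G]` into `[N,_i G]`; hence
`[N*,_k G]`, and so also `[N*,_{c-1} G]`, lies in `ker φ`. Then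
`ker φ ≤ [N*,_c G] = [[N*,_{c-1} G], G] ≤ [ker φ, G]`, and iterating this inclusion gives
`ker φ ≤ [ker φ,_c G] = 1`.
-/

section RelComm

variable {G H : Type*} [Group G] [Group H] [MulDistribMulAction G H]

lemma relComm_mono {X Y : Subgroup H} (h : X ≤ Y) : relComm G X ≤ relComm G Y :=
  Subgroup.closure_mono fun _ ⟨x, hx, g, hy⟩ => ⟨x, h hx, g, hy⟩

lemma relCommIter_top_succ_le : ∀ i, relCommIter G (⊤ : Subgroup H) (i + 1) ≤ relCommIter G ⊤ i
  | 0 => le_top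
  | i + 1 => relComm_mono (relCommIter_top_succ_le i)

lemma relCommIter_top_antitone : Antitone (relCommIter G (⊤ : Subgroup H)) :=
  antitone_nat_of_succ_le relCommIter_top_succ_le

lemma le_relCommIter_of_le_relComm {X : Subgroup H} (h : X ≤ relComm G X) :
    ∀ n, X ≤ relCommIter G X n
  | 0 => le_rfl
  | n + 1 => h.trans (relComm_mono (le_relCommIter_of_le_relComm h n))

variable (φ : H →* G) (hequiv : ∀ (g : G) (e : H), φ (g • e) = g * φ e * g⁻¹)
include hequiv

open scoped commutatorElement in
lemma map_relComm_le (X : Subgroup H) : (relComm G X).map φ ≤ ⁅X.map φ, (⊤ : Subgroup G)⁆ := by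
  rw [relComm, MonoidHom.map_closure, Subgroup.closure_le]
  rintro _ ⟨_, ⟨x, hx, g, rfl⟩, rfl⟩
  have hcomm : φ (x⁻¹ * (g • x)) = ⁅(φ x)⁻¹, g⁆ := by
    simp [hequiv, commutatorElement_def, mul_assoc]
  rw [hcomm]
  exact Subgroup.commutator_mem_commutator (inv_mem ⟨x, hx, rfl⟩) (Subgroup.mem_top g)

lemma map_relCommIter_le (X : Subgroup H) :
    ∀ i, (relCommIter G X i).map φ ≤ itComm (X.map φ) ⊤ i
  | 0 => le_rfl
  | i + 1 => (map_relComm_le φ hequiv _).trans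
      (Subgroup.commutator_mono (map_relCommIter_le X i) le_rfl)

end RelComm

theorem ker_trivial_of_relative_central_general {G : Type*} [Group G] (N : Subgroup G)
    (k c : ℕ) (hkc : k < c) (hnil : itComm N ⊤ k = ⊥)
    {Nstar : Type*} [Group Nstar] [MulDistribMulAction G Nstar]
    (φ : Nstar →* G) (hrange : φ.range = N)
    (hequiv : ∀ (g : G) (e : Nstar), φ (g • e) = g * φ e * g⁻¹)
    (hker : φ.ker ≤ relCommIter G (⊤ : Subgroup Nstar) c)
    (hZ : relCommIter G φ.ker c = ⊥) :
    φ.ker = ⊥ := by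
  have hk_le_ker : relCommIter G (⊤ : Subgroup Nstar) k ≤ φ.ker := by
    intro x hx
    have hφx := map_relCommIter_le φ hequiv ⊤ k ⟨x, hx, rfl⟩
    rwa [← MonoidHom.range_eq_map, hrange, hnil] at hφx
  have hpred_le_ker : relCommIter G (⊤ : Subgroup Nstar) (c - 1) ≤ φ.ker :=
    (relCommIter_top_antitone (by omega)).trans hk_le_ker
  have hker_le : φ.ker ≤ relComm G φ.ker := by
    obtain ⟨d, rfl⟩ : ∃ d, c = d + 1 := ⟨c - 1, by omega⟩
    exact hker.trans (relComm_mono hpred_le_ker)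
  exact le_bot_iff.mp (hZ ▸ le_relCommIter_of_le_relComm hker_le c)

/-- Let `G` be a group, `N` a normal subgroup of `G`, and `k, c` integers with `1 ≤ k < c` such
that `[N,_k G]` is trivial.  Let `N*` be a group on which `G` acts by automorphisms and let
`φ : N* → G` be a homomorphism with range `N` satisfying `φ(g • e) = g φ(e) g⁻¹`.  If
`ker φ ≤ [N*,_c G]` and `[ker φ,_c G]` is trivial, then `ker φ` is trivial. -/
theorem ker_trivial_of_relative_central {G : Type*} [Group G] (N : Subgroup G) [N.Normal]
    (k c : ℕ) (hk : 1 ≤ k) (hkc : k < c) (hnil : itComm N ⊤ k = ⊥)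
    {Nstar : Type*} [Group Nstar] [MulDistribMulAction G Nstar]
    (φ : Nstar →* G) (hrange : φ.range = N)
    (hequiv : ∀ (g : G) (e : Nstar), φ (g • e) = g * φ e * g⁻¹)
    (hker : φ.ker ≤ relCommIter G (⊤ : Subgroup Nstar) c)
    (hZ : relCommIter G φ.ker c = ⊥) :
    φ.ker = ⊥ :=
  ker_trivial_of_relative_central_general N k c hkc hnil φ hrange hequiv hker hZ
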